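/- arXiv:1110.5921 — 7 statements merged into one kernel-verified Lean document; each statement's English description precedes it below -/
import Mathlib

section
/- The transformations X = x + 2λ₃e^t + λ₂, T = t + λ₁, ln U = ln u − λ₃e^t x − λ₃²e^{2t} + λ₄e^t form a symmetry group of the heat equation with logarithmic source: if u(x,t) satisfies u_t = u_xx + u ln u, then the transformed function U(X,T) satisfies U_T = U_XX + U ln U. -/
/-- The transformations `X = x + 2λ₃e^t + λ₂`, `T = t + λ₁`,
`ln U = ln u − λ₃ e^t x − λ₃² e^{2t} + λ₄ e^t` form a symmetry group of the
heat equation with logarithmic source `u_t = u_xx + u ln u`. -/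
theorem heat_log_symmetry
    (u U : ℝ → ℝ → ℝ) (l1 l2 l3 l4 : ℝ)
    (hu_pos : ∀ x t, 0 < u x t)
    (hu_smooth : ContDiff ℝ (⊤ : ℕ∞) (fun p : ℝ × ℝ => u p.1 p.2))
    (hU : ∀ x t, U (x + 2 * l3 * Real.exp t + l2) (t + l1) =
      Real.exp (Real.log (u x t) - l3 * Real.exp t * x
        - l3 ^ 2 * Real.exp (2 * t) + l4 * Real.exp t))
    (hpde : ∀ x t, deriv (fun s => u x s) t =
      deriv (fun y => deriv (fun y' => u y' t) y) x + u x t * Real.log (u x t)) :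
    ∀ X T, deriv (fun S => U X S) T =
      deriv (fun Y => deriv (fun Y' => U Y' T) Y) X + U X T * Real.log (U X T) := by
  have hfdiff : Differentiable ℝ (fun p : ℝ × ℝ => u p.1 p.2) := hu_smooth.differentiable (by simp)
  have hg : ContDiff ℝ (⊤ : ℕ∞) (fun p : ℝ × ℝ => fderiv ℝ (fun q : ℝ × ℝ => u q.1 q.2) p (1, 0)) :=
    (hu_smooth.fderiv_right (by simp)).clm_apply contDiff_const
  have hgdiff : Differentiable ℝ (fun p : ℝ × ℝ => fderiv ℝ (fun q : ℝ × ℝ => u q.1 q.2) p (1, 0)) :=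
    hg.differentiable (by simp)
  have hux : ∀ x t : ℝ, HasDerivAt (fun y => u y t)
      (fderiv ℝ (fun q : ℝ × ℝ => u q.1 q.2) (x, t) (1, 0)) x := fun x t =>
    by have := (hfdiff (x, t)).hasFDerivAt.comp_hasDerivAt x (HasDerivAt.prodMk (hasDerivAt_id x) (hasDerivAt_const x t)); exact this
  have hut : ∀ x t : ℝ, HasDerivAt (fun s => u x s)
      (fderiv ℝ (fun q : ℝ × ℝ => u q.1 q.2) (x, t) (0, 1)) t := fun x t =>
    (hfdiff (x, t)).hasFDerivAt.comp_hasDerivAt t (HasDerivAt.prodMk (hasDerivAt_const t x) (hasDerivAt_id t))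
  have huxx : ∀ x t : ℝ, HasDerivAt (fun y => fderiv ℝ (fun q : ℝ × ℝ => u q.1 q.2) (y, t) (1, 0))
      (fderiv ℝ (fun p : ℝ × ℝ => fderiv ℝ (fun q : ℝ × ℝ => u q.1 q.2) p (1, 0)) (x, t) (1, 0)) x :=
    fun x t => by have := (hgdiff (x, t)).hasFDerivAt.comp_hasDerivAt x
                        (HasDerivAt.prodMk (hasDerivAt_id x) (hasDerivAt_const x t)); exact this
  have hlin : ∀ (p : ℝ × ℝ) (a b : ℝ), fderiv ℝ (fun q : ℝ × ℝ => u q.1 q.2) p (a, b) =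
      a * fderiv ℝ (fun q : ℝ × ℝ => u q.1 q.2) p (1, 0) +
      b * fderiv ℝ (fun q : ℝ × ℝ => u q.1 q.2) p (0, 1) := by
    intro p a b
    have h : ((a, b) : ℝ × ℝ) = a • ((1:ℝ), (0:ℝ)) + b • ((0:ℝ), (1:ℝ)) := by
      simp [Prod.ext_iff]
    rw [h, map_add, map_smul, map_smul, smul_eq_mul, smul_eq_mul]
  have hpde' : ∀ x t : ℝ, fderiv ℝ (fun q : ℝ × ℝ => u q.1 q.2) (x, t) (0, 1) =
      fderiv ℝ (fun p : ℝ × ℝ => fderiv ℝ (fun q : ℝ × ℝ => u q.1 q.2) p (1, 0)) (x, t) (1, 0)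
        + u x t * Real.log (u x t) := by
    intro x t
    have h := hpde x t
    rw [(hut x t).deriv, show (fun y => deriv (fun y' => u y' t) y)
        = fun y => fderiv ℝ (fun q : ℝ × ℝ => u q.1 q.2) (y, t) (1, 0) from
      funext fun y => (hux y t).deriv, (huxx x t).deriv] at h
    exact h
  have hU' : ∀ Y S : ℝ, U Y S =
      u (Y - 2 * l3 * Real.exp (S - l1) - l2) (S - l1) *
        Real.exp (-(l3 * Real.exp (S - l1) * (Y - 2 * l3 * Real.exp (S - l1) - l2))
          - l3 ^ 2 * Real.exp (2 * (S - l1)) + l4 * Real.exp (S - l1)) := by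
    intro Y S
    have h := hU (Y - 2 * l3 * Real.exp (S - l1) - l2) (S - l1)
    rw [show Y - 2 * l3 * Real.exp (S - l1) - l2 + 2 * l3 * Real.exp (S - l1) + l2 = Y from by ring,
        show S - l1 + l1 = S from by ring] at h
    rw [h, show Real.log (u (Y - 2 * l3 * Real.exp (S - l1) - l2) (S - l1))
          - l3 * Real.exp (S - l1) * (Y - 2 * l3 * Real.exp (S - l1) - l2)
          - l3 ^ 2 * Real.exp (2 * (S - l1)) + l4 * Real.exp (S - l1)
        = (-(l3 * Real.exp (S - l1) * (Y - 2 * l3 * Real.exp (S - l1) - l2))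
          - l3 ^ 2 * Real.exp (2 * (S - l1)) + l4 * Real.exp (S - l1))
          + Real.log (u (Y - 2 * l3 * Real.exp (S - l1) - l2) (S - l1)) from by ring,
      Real.exp_add, Real.exp_log (hu_pos _ _)]
    ring
  intro X T
  have he : HasDerivAt (fun S : ℝ => Real.exp (S - l1)) (Real.exp (T - l1)) T := by
    simpa using ((hasDerivAt_id T).sub_const l1).exp
  have he2 : HasDerivAt (fun S : ℝ => Real.exp (2 * (S - l1))) (Real.exp (2 * (T - l1)) * 2) T := by
    simpa using (((hasDerivAt_id T).sub_const l1).const_mul 2).exp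
  have ha : HasDerivAt (fun S : ℝ => X - 2 * l3 * Real.exp (S - l1) - l2)
      (-(2 * l3 * Real.exp (T - l1))) T := by
    simpa using ((he.const_mul (2 * l3)).const_sub X).sub_const l2
  have hb : HasDerivAt (fun S : ℝ => S - l1) 1 T := (hasDerivAt_id T).sub_const l1
  have hγu : HasDerivAt (fun S : ℝ => u (X - 2 * l3 * Real.exp (S - l1) - l2) (S - l1))
      (fderiv ℝ (fun q : ℝ × ℝ => u q.1 q.2)
        (X - 2 * l3 * Real.exp (T - l1) - l2, T - l1) (-(2 * l3 * Real.exp (T - l1)), 1)) T :=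
    (hfdiff _).hasFDerivAt.comp_hasDerivAt T (HasDerivAt.prodMk ha hb)
  have hψT : HasDerivAt (fun S : ℝ =>
      -(l3 * Real.exp (S - l1) * (X - 2 * l3 * Real.exp (S - l1) - l2))
        - l3 ^ 2 * Real.exp (2 * (S - l1)) + l4 * Real.exp (S - l1))
      (-(l3 * Real.exp (T - l1) * (X - 2 * l3 * Real.exp (T - l1) - l2)
          + l3 * Real.exp (T - l1) * (-(2 * l3 * Real.exp (T - l1))))
        - l3 ^ 2 * (Real.exp (2 * (T - l1)) * 2) + l4 * Real.exp (T - l1)) T :=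
    ((((he.const_mul l3).mul ha).neg).sub (he2.const_mul (l3 ^ 2))).add (he.const_mul l4)
  have hA : HasDerivAt (fun S : ℝ =>
      u (X - 2 * l3 * Real.exp (S - l1) - l2) (S - l1) *
        Real.exp (-(l3 * Real.exp (S - l1) * (X - 2 * l3 * Real.exp (S - l1) - l2))
          - l3 ^ 2 * Real.exp (2 * (S - l1)) + l4 * Real.exp (S - l1)))
      (fderiv ℝ (fun q : ℝ × ℝ => u q.1 q.2)
          (X - 2 * l3 * Real.exp (T - l1) - l2, T - l1) (-(2 * l3 * Real.exp (T - l1)), 1) *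
        Real.exp (-(l3 * Real.exp (T - l1) * (X - 2 * l3 * Real.exp (T - l1) - l2))
          - l3 ^ 2 * Real.exp (2 * (T - l1)) + l4 * Real.exp (T - l1))
      + u (X - 2 * l3 * Real.exp (T - l1) - l2) (T - l1) *
        (Real.exp (-(l3 * Real.exp (T - l1) * (X - 2 * l3 * Real.exp (T - l1) - l2))
            - l3 ^ 2 * Real.exp (2 * (T - l1)) + l4 * Real.exp (T - l1)) *
          (-(l3 * Real.exp (T - l1) * (X - 2 * l3 * Real.exp (T - l1) - l2)
              + l3 * Real.exp (T - l1) * (-(2 * l3 * Real.exp (T - l1))))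
            - l3 ^ 2 * (Real.exp (2 * (T - l1)) * 2) + l4 * Real.exp (T - l1)))) T :=
    hγu.mul hψT.exp
  have hshift : ∀ Y : ℝ, HasDerivAt
      (fun Y' : ℝ => Y' - 2 * l3 * Real.exp (T - l1) - l2) 1 Y := fun Y =>
    ((hasDerivAt_id Y).sub_const (2 * l3 * Real.exp (T - l1))).sub_const l2
  have hu1 : ∀ Y : ℝ, HasDerivAt
      (fun Y' : ℝ => u (Y' - 2 * l3 * Real.exp (T - l1) - l2) (T - l1))
      (fderiv ℝ (fun q : ℝ × ℝ => u q.1 q.2)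
        (Y - 2 * l3 * Real.exp (T - l1) - l2, T - l1) (1, 0) * 1) Y := fun Y =>
    by have := (hux (Y - 2 * l3 * Real.exp (T - l1) - l2) (T - l1)).comp Y (hshift Y); exact this
  have hψx : ∀ Y : ℝ, HasDerivAt (fun Y' : ℝ =>
      -(l3 * Real.exp (T - l1) * (Y' - 2 * l3 * Real.exp (T - l1) - l2))
        - l3 ^ 2 * Real.exp (2 * (T - l1)) + l4 * Real.exp (T - l1))
      (-(l3 * Real.exp (T - l1) * 1)) Y := fun Y =>
    ((((hshift Y).const_mul (l3 * Real.exp (T - l1))).neg).sub_const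
      (l3 ^ 2 * Real.exp (2 * (T - l1)))).add_const (l4 * Real.exp (T - l1))
  have hin : ∀ Y : ℝ, HasDerivAt (fun Y' : ℝ =>
      u (Y' - 2 * l3 * Real.exp (T - l1) - l2) (T - l1) *
        Real.exp (-(l3 * Real.exp (T - l1) * (Y' - 2 * l3 * Real.exp (T - l1) - l2))
          - l3 ^ 2 * Real.exp (2 * (T - l1)) + l4 * Real.exp (T - l1)))
      (fderiv ℝ (fun q : ℝ × ℝ => u q.1 q.2)
          (Y - 2 * l3 * Real.exp (T - l1) - l2, T - l1) (1, 0) * 1 *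
        Real.exp (-(l3 * Real.exp (T - l1) * (Y - 2 * l3 * Real.exp (T - l1) - l2))
          - l3 ^ 2 * Real.exp (2 * (T - l1)) + l4 * Real.exp (T - l1))
      + u (Y - 2 * l3 * Real.exp (T - l1) - l2) (T - l1) *
        (Real.exp (-(l3 * Real.exp (T - l1) * (Y - 2 * l3 * Real.exp (T - l1) - l2))
            - l3 ^ 2 * Real.exp (2 * (T - l1)) + l4 * Real.exp (T - l1)) *
          -(l3 * Real.exp (T - l1) * 1))) Y := fun Y =>
    (hu1 Y).mul (hψx Y).exp
  have hBfun : (fun Y : ℝ => deriv (fun Y' : ℝ =>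
      u (Y' - 2 * l3 * Real.exp (T - l1) - l2) (T - l1) *
        Real.exp (-(l3 * Real.exp (T - l1) * (Y' - 2 * l3 * Real.exp (T - l1) - l2))
          - l3 ^ 2 * Real.exp (2 * (T - l1)) + l4 * Real.exp (T - l1))) Y)
      = fun Y : ℝ =>
      fderiv ℝ (fun q : ℝ × ℝ => u q.1 q.2)
          (Y - 2 * l3 * Real.exp (T - l1) - l2, T - l1) (1, 0) * 1 *
        Real.exp (-(l3 * Real.exp (T - l1) * (Y - 2 * l3 * Real.exp (T - l1) - l2))
          - l3 ^ 2 * Real.exp (2 * (T - l1)) + l4 * Real.exp (T - l1))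
      + u (Y - 2 * l3 * Real.exp (T - l1) - l2) (T - l1) *
        (Real.exp (-(l3 * Real.exp (T - l1) * (Y - 2 * l3 * Real.exp (T - l1) - l2))
            - l3 ^ 2 * Real.exp (2 * (T - l1)) + l4 * Real.exp (T - l1)) *
          -(l3 * Real.exp (T - l1) * 1)) :=
    funext fun Y => (hin Y).deriv
  have hP : HasDerivAt (fun Y : ℝ => fderiv ℝ (fun q : ℝ × ℝ => u q.1 q.2)
      (Y - 2 * l3 * Real.exp (T - l1) - l2, T - l1) (1, 0))
      (fderiv ℝ (fun p : ℝ × ℝ => fderiv ℝ (fun q : ℝ × ℝ => u q.1 q.2) p (1, 0))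
        (X - 2 * l3 * Real.exp (T - l1) - l2, T - l1) (1, 0) * 1) X :=
    by have := (huxx (X - 2 * l3 * Real.exp (T - l1) - l2) (T - l1)).comp X (hshift X); exact this
  have hC : HasDerivAt (fun Y : ℝ =>
      fderiv ℝ (fun q : ℝ × ℝ => u q.1 q.2)
          (Y - 2 * l3 * Real.exp (T - l1) - l2, T - l1) (1, 0) * 1 *
        Real.exp (-(l3 * Real.exp (T - l1) * (Y - 2 * l3 * Real.exp (T - l1) - l2))
          - l3 ^ 2 * Real.exp (2 * (T - l1)) + l4 * Real.exp (T - l1))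
      + u (Y - 2 * l3 * Real.exp (T - l1) - l2) (T - l1) *
        (Real.exp (-(l3 * Real.exp (T - l1) * (Y - 2 * l3 * Real.exp (T - l1) - l2))
            - l3 ^ 2 * Real.exp (2 * (T - l1)) + l4 * Real.exp (T - l1)) *
          -(l3 * Real.exp (T - l1) * 1)))
      ((fderiv ℝ (fun p : ℝ × ℝ => fderiv ℝ (fun q : ℝ × ℝ => u q.1 q.2) p (1, 0))
          (X - 2 * l3 * Real.exp (T - l1) - l2, T - l1) (1, 0) * 1 * 1 *
        Real.exp (-(l3 * Real.exp (T - l1) * (X - 2 * l3 * Real.exp (T - l1) - l2))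
          - l3 ^ 2 * Real.exp (2 * (T - l1)) + l4 * Real.exp (T - l1))
      + fderiv ℝ (fun q : ℝ × ℝ => u q.1 q.2)
          (X - 2 * l3 * Real.exp (T - l1) - l2, T - l1) (1, 0) * 1 *
        (Real.exp (-(l3 * Real.exp (T - l1) * (X - 2 * l3 * Real.exp (T - l1) - l2))
            - l3 ^ 2 * Real.exp (2 * (T - l1)) + l4 * Real.exp (T - l1)) *
          -(l3 * Real.exp (T - l1) * 1)))
      + (fderiv ℝ (fun q : ℝ × ℝ => u q.1 q.2)
          (X - 2 * l3 * Real.exp (T - l1) - l2, T - l1) (1, 0) * 1 *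
        (Real.exp (-(l3 * Real.exp (T - l1) * (X - 2 * l3 * Real.exp (T - l1) - l2))
            - l3 ^ 2 * Real.exp (2 * (T - l1)) + l4 * Real.exp (T - l1)) *
          -(l3 * Real.exp (T - l1) * 1))
      + u (X - 2 * l3 * Real.exp (T - l1) - l2) (T - l1) *
        (Real.exp (-(l3 * Real.exp (T - l1) * (X - 2 * l3 * Real.exp (T - l1) - l2))
            - l3 ^ 2 * Real.exp (2 * (T - l1)) + l4 * Real.exp (T - l1)) *
          -(l3 * Real.exp (T - l1) * 1) *
          -(l3 * Real.exp (T - l1) * 1)))) X :=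
    (((hP.mul_const 1).mul (hψx X).exp).add
      ((hu1 X).mul ((hψx X).exp.mul_const (-(l3 * Real.exp (T - l1) * 1)))))
  have hsq : Real.exp (2 * (T - l1)) = Real.exp (T - l1) * Real.exp (T - l1) := by
    rw [two_mul, Real.exp_add]
  simp only [hU']
  rw [hA.deriv, hBfun, hC.deriv,
    Real.log_mul (hu_pos _ _).ne' (Real.exp_ne_zero _), Real.log_exp,
    hlin (X - 2 * l3 * Real.exp (T - l1) - l2, T - l1) (-(2 * l3 * Real.exp (T - l1))) 1,
    hpde' (X - 2 * l3 * Real.exp (T - l1) - l2) (T - l1), hsq]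
  ring
end

section
/- Under the flat-time assumption t_{1,0} = t_{0,0} = t_{-1,0}, solving the normalization equations X_{0,0} = 0, T_{0,0} = 0, ln U_{0,0} = 0, (ln U)_x^d = 0 for the heat-equation group action yields the unique group parameters λ₁ = −t_{0,0}, λ₂ = −(x_{0,0} + 2(ln u)_x^d), λ₃ = e^{−t_{0,0}}(ln u)_x^d, λ₄ = e^{−t_{0,0}}(−ln u_{0,0} + x_{0,0}(ln u)_x^d + ((ln u)_x^d)²). -/
/-! Since all three points share the time `t`, the transformed points are translated by the same
amount `2 λ₃ eᵗ + λ₂`, while `ln U` changes by the affine function `-λ₃ eᵗ x + const`; hence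
`(ln U)_X^d = (ln u)_x^d - λ₃ eᵗ`. The normalization equations are then triangular in
`λ₃ eᵗ, λ₁, λ₂, λ₄ eᵗ`, and dividing by `eᵗ > 0` gives the parameters. -/

open Real

lemma eq_exp_neg_mul_iff {a b : ℝ} (t : ℝ) : a = exp (-t) * b ↔ a * exp t = b := by
  rw [exp_neg, ← div_eq_inv_mul, eq_div_iff (exp_pos t).ne']

lemma divDiff_affine_add {x y v w : ℝ} (h : x ≠ y) (a b c : ℝ) :
    ((v - a * x + c) - (w - a * y + c)) / ((x + b) - (y + b)) = (v - w) / (x - y) - a := by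
  rw [add_sub_add_right_eq_sub, add_sub_add_right_eq_sub,
    show v - a * x - (w - a * y) = v - w - a * (x - y) by ring, sub_div,
    mul_div_cancel_right₀ a (sub_ne_zero.mpr h)]

theorem heat_product_frame_general
    (xm1 x0 x1 t : ℝ) (um1 u0 u1 : ℝ)
    (hx : x1 ≠ xm1)
    (p : ℝ) (hp : p = (Real.log u1 - Real.log um1) / (x1 - xm1))
    (l1 l2 l3 l4 : ℝ) :
    (x0 + 2 * l3 * Real.exp t + l2 = 0 ∧
     t + l1 = 0 ∧
     Real.log u0 - l3 * Real.exp t * x0 - l3 ^ 2 * Real.exp (2 * t)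
       + l4 * Real.exp t = 0 ∧
     ((Real.log u1 - l3 * Real.exp t * x1 - l3 ^ 2 * Real.exp (2 * t)
         + l4 * Real.exp t)
       - (Real.log um1 - l3 * Real.exp t * xm1 - l3 ^ 2 * Real.exp (2 * t)
         + l4 * Real.exp t))
       / ((x1 + 2 * l3 * Real.exp t + l2) - (xm1 + 2 * l3 * Real.exp t + l2)) = 0)
    ↔
    (l1 = -t ∧
     l2 = -(x0 + 2 * p) ∧
     l3 = Real.exp (-t) * p ∧
     l4 = Real.exp (-t) * (-Real.log u0 + x0 * p + p ^ 2)) := by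
  have hquot : ((log u1 - l3 * exp t * x1 - l3 ^ 2 * exp (2 * t) + l4 * exp t)
        - (log um1 - l3 * exp t * xm1 - l3 ^ 2 * exp (2 * t) + l4 * exp t))
        / ((x1 + 2 * l3 * exp t + l2) - (xm1 + 2 * l3 * exp t + l2)) = p - l3 * exp t := by
    rw [hp, ← divDiff_affine_add hx (l3 * exp t) (2 * l3 * exp t + l2)
      (l4 * exp t - l3 ^ 2 * exp (2 * t))]
    ring
  rw [hquot, sub_eq_zero, eq_exp_neg_mul_iff, eq_exp_neg_mul_iff, two_mul t, exp_add]
  constructor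
  · rintro ⟨h1, h2, h3, h4⟩
    refine ⟨by linarith, by linear_combination h1 + 2 * h4, h4.symm, ?_⟩
    linear_combination h3 - (x0 + l3 * exp t + p) * h4
  · rintro ⟨h1, h2, h3, h4⟩
    refine ⟨by linear_combination h2 + 2 * h3, by linarith, ?_, h3.symm⟩
    linear_combination h4 - (x0 + l3 * exp t + p) * h3

/-- Under the flat-time assumption, the normalization equations
`X₀₀ = 0`, `T₀₀ = 0`, `ln U₀₀ = 0`, `(ln U)_x^d = 0` for the heat-equation
group action determine the group parameters uniquely, and they are given by
the product frame formulas. -/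
theorem heat_product_frame
    (xm1 x0 x1 t : ℝ) (um1 u0 u1 : ℝ)
    (hum1 : 0 < um1) (hu0 : 0 < u0) (hu1 : 0 < u1)
    (hx : x1 ≠ xm1)
    (p : ℝ) (hp : p = (Real.log u1 - Real.log um1) / (x1 - xm1))
    (l1 l2 l3 l4 : ℝ) :
    (x0 + 2 * l3 * Real.exp t + l2 = 0 ∧
     t + l1 = 0 ∧
     Real.log u0 - l3 * Real.exp t * x0 - l3 ^ 2 * Real.exp (2 * t)
       + l4 * Real.exp t = 0 ∧
     ((Real.log u1 - l3 * Real.exp t * x1 - l3 ^ 2 * Real.exp (2 * t)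
         + l4 * Real.exp t)
       - (Real.log um1 - l3 * Real.exp t * xm1 - l3 ^ 2 * Real.exp (2 * t)
         + l4 * Real.exp t))
       / ((x1 + 2 * l3 * Real.exp t + l2) - (xm1 + 2 * l3 * Real.exp t + l2)) = 0)
    ↔
    (l1 = -t ∧
     l2 = -(x0 + 2 * p) ∧
     l3 = Real.exp (-t) * p ∧
     l4 = Real.exp (-t) * (-Real.log u0 + x0 * p + p ^ 2)) :=
  heat_product_frame_general xm1 x0 x1 t um1 u0 u1 hx p hp l1 l2 l3 l4
end

section
/- The quantity J^d = (ln u)_{xx}^d := (2/(x_{1,0}−x_{-1,0}))·[(ln u_{1,0} − ln u_{0,0})/(x_{1,0}−x_{0,0}) − (ln u_{0,0} − ln u_{-1,0})/(x_{0,0}−x_{-1,0})] is invariant under the heat-equation symmetry group: replacing every x_{m,0} by X_{m,0} and ln u_{m,0} by ln U_{m,0} leaves its value unchanged, provided the three points have equal time coordinates. -/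
/-!
At a fixed time `t` the symmetry group acts on a point by translating `x` by a constant and adding
to `ln u` a function affine in `x`. Divided differences only see differences of the `x`-coordinates,
and the second divided difference annihilates affine functions.
-/

section SecondDividedDiff

variable {𝕜 : Type*} [Field 𝕜]

/-- The factor `2` makes this `(ln u)_{xx}^d`: it equals `f''` when `f` is quadratic. -/
def secondDividedDiff (x₀ x₁ x₂ f₀ f₁ f₂ : 𝕜) : 𝕜 :=
  2 / (x₂ - x₀) * ((f₂ - f₁) / (x₂ - x₁) - (f₁ - f₀) / (x₁ - x₀))

theorem secondDividedDiff_add_right (x₀ x₁ x₂ s f₀ f₁ f₂ : 𝕜) :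
    secondDividedDiff (x₀ + s) (x₁ + s) (x₂ + s) f₀ f₁ f₂ = secondDividedDiff x₀ x₁ x₂ f₀ f₁ f₂ := by
  simp only [secondDividedDiff, add_sub_add_right_eq_sub]

theorem div_sub_add_affine {x₀ x₁ : 𝕜} (h : x₁ ≠ x₀) (f₀ f₁ a b : 𝕜) :
    (f₁ + (a * x₁ + b) - (f₀ + (a * x₀ + b))) / (x₁ - x₀) = (f₁ - f₀) / (x₁ - x₀) + a := by
  have h' : x₁ - x₀ ≠ 0 := sub_ne_zero.mpr h
  field_simp
  ring

theorem secondDividedDiff_add_affine {x₀ x₁ x₂ : 𝕜} (h₁₀ : x₁ ≠ x₀) (h₂₁ : x₂ ≠ x₁)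
    (f₀ f₁ f₂ a b : 𝕜) :
    secondDividedDiff x₀ x₁ x₂ (f₀ + (a * x₀ + b)) (f₁ + (a * x₁ + b)) (f₂ + (a * x₂ + b)) =
      secondDividedDiff x₀ x₁ x₂ f₀ f₁ f₂ := by
  simp only [secondDividedDiff, div_sub_add_affine h₁₀, div_sub_add_affine h₂₁, add_sub_add_right_eq_sub]

end SecondDividedDiff

theorem second_difference_invariant_general
    (l2 l3 l4 : ℝ) (xm1 x0 x1 t : ℝ) (um1 u0 u1 : ℝ)
    (h10 : x1 ≠ x0) (h0m1 : x0 ≠ xm1)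
    (X : ℝ → ℝ) (hX : X = fun x => x + 2 * l3 * Real.exp t + l2)
    (lnU : ℝ → ℝ → ℝ)
    (hlnU : lnU = fun x u => Real.log u - l3 * Real.exp t * x
      - l3 ^ 2 * Real.exp (2 * t) + l4 * Real.exp t) :
    (2 / (X x1 - X xm1)) *
      ((lnU x1 u1 - lnU x0 u0) / (X x1 - X x0)
        - (lnU x0 u0 - lnU xm1 um1) / (X x0 - X xm1))
    =
    (2 / (x1 - xm1)) *
      ((Real.log u1 - Real.log u0) / (x1 - x0)
        - (Real.log u0 - Real.log um1) / (x0 - xm1)) := by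
  have hX_translate : ∀ x, X x = x + (2 * l3 * Real.exp t + l2) := by
    intro x; rw [hX]; ring
  have hlnU_affine : ∀ x u, lnU x u =
      Real.log u + (-(l3 * Real.exp t) * x + (l4 * Real.exp t - l3 ^ 2 * Real.exp (2 * t))) := by
    intro x u; rw [hlnU]; ring
  simp only [hX_translate, hlnU_affine]
  exact (secondDividedDiff_add_right _ _ _ _ _ _ _).trans
    (secondDividedDiff_add_affine h0m1 h10 _ _ _ _ _)

/-- The discrete second derivative `(ln u)_{xx}^d` is invariant under the
heat-equation symmetry group, applied diagonally to three points sharing the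
same time coordinate. -/
theorem second_difference_invariant
    (l1 l2 l3 l4 : ℝ) (xm1 x0 x1 t : ℝ) (um1 u0 u1 : ℝ)
    (hum1 : 0 < um1) (hu0 : 0 < u0) (hu1 : 0 < u1)
    (h10 : x1 ≠ x0) (h0m1 : x0 ≠ xm1) (h1m1 : x1 ≠ xm1)
    (X : ℝ → ℝ) (hX : X = fun x => x + 2 * l3 * Real.exp t + l2)
    (lnU : ℝ → ℝ → ℝ)
    (hlnU : lnU = fun x u => Real.log u - l3 * Real.exp t * x
      - l3 ^ 2 * Real.exp (2 * t) + l4 * Real.exp t) :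
    (2 / (X x1 - X xm1)) *
      ((lnU x1 u1 - lnU x0 u0) / (X x1 - X x0)
        - (lnU x0 u0 - lnU xm1 um1) / (X x0 - X xm1))
    =
    (2 / (x1 - xm1)) *
      ((Real.log u1 - Real.log u0) / (x1 - x0)
        - (Real.log u0 - Real.log um1) / (x0 - xm1)) :=
  second_difference_invariant_general l2 l3 l4 xm1 x0 x1 t um1 u0 u1 h10 h0m1 X hX lnU hlnU
end

section
/- The quantity I := (ln u)_t − ln u − ((ln u)_x)² is a differential invariant of the heat-equation symmetry group: if v = ln u and V = ln U are related by V(X,T) = v(x,t) − λ₃e^t x − λ₃²e^{2t} + λ₄e^t with X = x + 2λ₃e^t + λ₂, T = t + λ₁, then V_T − V − (V_X)² evaluated at (X,T) equals v_t − v − (v_x)² evaluated at (x,t). -/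
/-- The quantity `I = v_t − v − v_x²` (with `v = ln u`) is a differential
invariant of the heat-equation symmetry group: if
`V(X,T) = v(x,t) − λ₃ e^t x − λ₃² e^{2t} + λ₄ e^t` with
`X = x + 2λ₃ e^t + λ₂`, `T = t + λ₁`, then
`V_T − V − (V_X)²` at `(X,T)` equals `v_t − v − (v_x)²` at `(x,t)`. -/
theorem heat_invariant_I
    (v V : ℝ → ℝ → ℝ) (l1 l2 l3 l4 : ℝ)
    (hv : ContDiff ℝ (⊤ : ℕ∞) (fun p : ℝ × ℝ => v p.1 p.2))
    (hV : ∀ x t, V (x + 2 * l3 * Real.exp t + l2) (t + l1) =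
      v x t - l3 * Real.exp t * x - l3 ^ 2 * Real.exp (2 * t) + l4 * Real.exp t) :
    ∀ x t,
      deriv (fun S => V (x + 2 * l3 * Real.exp t + l2) S) (t + l1)
        - V (x + 2 * l3 * Real.exp t + l2) (t + l1)
        - (deriv (fun Y => V Y (t + l1)) (x + 2 * l3 * Real.exp t + l2)) ^ 2
      = deriv (fun s => v x s) t - v x t - (deriv (fun y => v y t) x) ^ 2 := by
  intro x t
  set F : ℝ × ℝ → ℝ := fun p => v p.1 p.2 with hF
  have hFd : Differentiable ℝ F := hv.differentiable (by simp)
  set L := fderiv ℝ F (x, t) with hL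
  have hFA : HasFDerivAt F L (x, t) := (hFd (x, t)).hasFDerivAt
  set e := Real.exp t with he
  -- partial derivatives of v
  have hvx : HasDerivAt (fun y => v y t) (L (1, 0)) x := by
    have hc : HasDerivAt (fun y : ℝ => ((y, t) : ℝ × ℝ)) (1, 0) x :=
      (hasDerivAt_id x).prodMk (hasDerivAt_const x t)
    exact hFA.comp_hasDerivAt x hc
  have hvt : HasDerivAt (fun s => v x s) (L (0, 1)) t := by
    have hc : HasDerivAt (fun s : ℝ => ((x, s) : ℝ × ℝ)) (0, 1) t :=
      (hasDerivAt_const t x).prodMk (hasDerivAt_id t)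
    exact hFA.comp_hasDerivAt t hc
  -- V_X
  have hVXfun : (fun Y => V Y (t + l1)) =
      fun Y => v (Y - 2 * l3 * e - l2) t - l3 * e * (Y - 2 * l3 * e - l2)
        - l3 ^ 2 * Real.exp (2 * t) + l4 * e := by
    funext Y
    have := hV (Y - 2 * l3 * e - l2) t
    rw [← he] at this
    convert this using 2 <;> ring
  have hVX : HasDerivAt (fun Y => V Y (t + l1)) (L (1, 0) - l3 * e)
      (x + 2 * l3 * e + l2) := by
    rw [hVXfun]
    have hc : HasDerivAt (fun Y : ℝ => ((Y - 2 * l3 * e - l2, t) : ℝ × ℝ)) (1, 0)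
        (x + 2 * l3 * e + l2) :=
      (((hasDerivAt_id _).sub_const _).sub_const _).prodMk (hasDerivAt_const _ t)
    have h1 : HasDerivAt (fun Y => v (Y - 2 * l3 * e - l2) t) (L (1, 0))
        (x + 2 * l3 * e + l2) := by
      have hpt : ((x + 2 * l3 * e + l2 - 2 * l3 * e - l2, t) : ℝ × ℝ) = (x, t) := by
        rw [Prod.mk.injEq]; exact ⟨by ring, rfl⟩
      have := (hpt ▸ hFA).comp_hasDerivAt (x + 2 * l3 * e + l2) hc
      simpa [Function.comp_def] using this
    have h2 : HasDerivAt (fun Y : ℝ => l3 * e * (Y - 2 * l3 * e - l2)) (l3 * e)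
        (x + 2 * l3 * e + l2) := by
      simpa using (((hasDerivAt_id _).sub_const (2 * l3 * e)).sub_const l2).const_mul (l3 * e)
    simpa using ((h1.fun_sub h2).sub_const (l3 ^ 2 * Real.exp (2 * t))).add_const (l4 * e)
  -- V_T
  have hexp : HasDerivAt (fun S : ℝ => Real.exp (S - l1)) e (t + l1) := by
    have h1 : HasDerivAt (fun S : ℝ => S - l1) 1 (t + l1) := (hasDerivAt_id _).sub_const l1
    have := (Real.hasDerivAt_exp (t + l1 - l1)).comp (t + l1) h1
    simpa [Function.comp_def] using this
  have hexp2 : HasDerivAt (fun S : ℝ => Real.exp (2 * (S - l1))) (2 * Real.exp (2 * t))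
      (t + l1) := by
    have h1 : HasDerivAt (fun S : ℝ => 2 * (S - l1)) 2 (t + l1) := by
      simpa using ((hasDerivAt_id _).sub_const l1).const_mul 2
    have := (Real.hasDerivAt_exp (2 * (t + l1 - l1))).comp (t + l1) h1
    simp only [add_sub_cancel_right, Function.comp_def] at this
    exact this.congr_deriv (by ring)
  have hVTfun : (fun S => V (x + 2 * l3 * e + l2) S) =
      fun S => v (x + 2 * l3 * e - 2 * l3 * Real.exp (S - l1)) (S - l1)
        - l3 * Real.exp (S - l1) * (x + 2 * l3 * e - 2 * l3 * Real.exp (S - l1))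
        - l3 ^ 2 * Real.exp (2 * (S - l1)) + l4 * Real.exp (S - l1) := by
    funext S
    have := hV (x + 2 * l3 * e - 2 * l3 * Real.exp (S - l1)) (S - l1)
    rw [sub_add_cancel] at this
    convert this using 2
    ring
  have hw : HasDerivAt (fun S : ℝ => x + 2 * l3 * e - 2 * l3 * Real.exp (S - l1))
      (-(2 * l3 * e)) (t + l1) := by
    simpa using (hasDerivAt_const (t + l1) (x + 2 * l3 * e)).fun_sub (hexp.const_mul (2 * l3))
  have hVT : HasDerivAt (fun S => V (x + 2 * l3 * e + l2) S)
      (L (-(2 * l3 * e), 1) - (l3 * e * x + l3 * e * (-(2 * l3 * e)))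
        - l3 ^ 2 * (2 * Real.exp (2 * t)) + l4 * e) (t + l1) := by
    rw [hVTfun]
    have hc : HasDerivAt (fun S : ℝ =>
        ((x + 2 * l3 * e - 2 * l3 * Real.exp (S - l1), S - l1) : ℝ × ℝ))
        (-(2 * l3 * e), 1) (t + l1) :=
      hw.prodMk ((hasDerivAt_id _).sub_const l1)
    have h1 : HasDerivAt (fun S => v (x + 2 * l3 * e - 2 * l3 * Real.exp (S - l1)) (S - l1))
        (L (-(2 * l3 * e), 1)) (t + l1) := by
      have hpt : (x + 2 * l3 * e - 2 * l3 * Real.exp (t + l1 - l1), t + l1 - l1) = ((x, t) : ℝ × ℝ) := by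
        simp [he]
      have := (hpt ▸ hFA).comp_hasDerivAt (t + l1) hc
      simpa [Function.comp_def] using this
    have h2 : HasDerivAt (fun S : ℝ =>
        l3 * Real.exp (S - l1) * (x + 2 * l3 * e - 2 * l3 * Real.exp (S - l1)))
        (l3 * e * x + l3 * e * (-(2 * l3 * e))) (t + l1) := by
      have := (hexp.const_mul l3).fun_mul hw
      simp only [add_sub_cancel_right, ← he] at this
      convert this using 1
    have h3 := (h1.sub h2).sub (hexp2.const_mul (l3 ^ 2))
    have h4 := h3.add (hexp.const_mul l4)
    exact h4
  -- linearity of L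
  have hlin : L (-(2 * l3 * e), 1) = -(2 * l3 * e) * L (1, 0) + L (0, 1) := by
    have : ((-(2 * l3 * e), 1) : ℝ × ℝ) = (-(2 * l3 * e)) • ((1, 0) : ℝ × ℝ) + ((0, 1) : ℝ × ℝ) := by
      simp
    rw [this, L.map_add, L.map_smul, smul_eq_mul]
  have he2 : Real.exp (2 * t) = e ^ 2 := by rw [two_mul, Real.exp_add, he, sq]
  rw [hVT.deriv, hvt.deriv, hvx.deriv, hVX.deriv, hV x t, ← he, hlin, he2]
  ring
end

section
/- The spherical Burgers equation u_t + u/t + u u_x + u_xx = 0 is invariant under the three-parameter group X = e^{λ₂}(x + λ₃ ln t) + λ₁, T = e^{2λ₂}t, U = e^{−λ₂}(u + λ₃/t): if u solves the equation for t > 0, then the transformed function U(X,T) solves U_T + U/T + U U_X + U_{XX} = 0. -/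
/-- The spherical Burgers equation `u_t + u/t + u u_x + u_xx = 0` is invariant
under the three-parameter group `X = e^{λ₂}(x + λ₃ ln t) + λ₁`,
`T = e^{2λ₂} t`, `U = e^{−λ₂}(u + λ₃/t)`. -/
theorem burgers_symmetry
    (u U : ℝ → ℝ → ℝ) (l1 l2 l3 : ℝ)
    (hu_smooth : ContDiffOn ℝ (⊤ : ℕ∞) (fun p : ℝ × ℝ => u p.1 p.2)
      {p : ℝ × ℝ | 0 < p.2})
    (hU : ∀ x t, 0 < t →
      U (Real.exp l2 * (x + l3 * Real.log t) + l1) (Real.exp (2 * l2) * t) =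
        Real.exp (-l2) * (u x t + l3 / t))
    (hpde : ∀ x t, 0 < t →
      deriv (fun s => u x s) t + u x t / t
        + u x t * deriv (fun y => u y t) x
        + deriv (fun y => deriv (fun y' => u y' t) y) x = 0) :
    ∀ X T, 0 < T →
      deriv (fun S => U X S) T + U X T / T
        + U X T * deriv (fun Y => U Y T) X
        + deriv (fun Y => deriv (fun Y' => U Y' T) Y) X = 0 := by
  intro X T hT
  have hs : IsOpen {p : ℝ × ℝ | 0 < p.2} := isOpen_lt continuous_const continuous_snd
  set F : ℝ × ℝ → ℝ := fun p => u p.1 p.2 with hF_def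
  have hF : ∀ p : ℝ × ℝ, 0 < p.2 → ContDiffAt ℝ (⊤ : ℕ∞) F p :=
    fun p hp => hu_smooth.contDiffAt (hs.mem_nhds hp)
  set F1 : ℝ × ℝ → ℝ := fun p => fderiv ℝ F p (1, 0) with hF1_def
  set F2 : ℝ × ℝ → ℝ := fun p => fderiv ℝ F p (0, 1) with hF2_def
  set F11 : ℝ × ℝ → ℝ := fun p => fderiv ℝ F1 p (1, 0) with hF11_def
  have hF1c : ∀ p : ℝ × ℝ, 0 < p.2 → ContDiffAt ℝ (⊤ : ℕ∞) F1 p :=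
    fun p hp => ((hF p hp).fderiv_right (by simp)).clm_apply contDiffAt_const
  -- generic slice derivatives
  have sliceX : ∀ (G : ℝ × ℝ → ℝ), (∀ p : ℝ × ℝ, 0 < p.2 → ContDiffAt ℝ (⊤ : ℕ∞) G p) →
      ∀ x t : ℝ, 0 < t → HasDerivAt (fun y => G (y, t)) (fderiv ℝ G (x, t) (1, 0)) x := by
    intro G hG x t ht
    have hd : HasFDerivAt G (fderiv ℝ G (x, t)) (x, t) :=
      ((hG (x, t) ht).differentiableAt (by simp)).hasFDerivAt
    have h2 : HasDerivAt (fun y : ℝ => (y, t)) ((1 : ℝ), (0 : ℝ)) x :=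
      HasDerivAt.prodMk (hasDerivAt_id x) (hasDerivAt_const x t)
    simpa [Function.comp_def] using hd.comp_hasDerivAt x h2
  have chain : ∀ (G : ℝ × ℝ → ℝ), (∀ p : ℝ × ℝ, 0 < p.2 → ContDiffAt ℝ (⊤ : ℕ∞) G p) →
      ∀ (σ τ : ℝ → ℝ) (σ' τ' S : ℝ), HasDerivAt σ σ' S → HasDerivAt τ τ' S → 0 < τ S →
      HasDerivAt (fun s => G (σ s, τ s))
        (σ' * fderiv ℝ G (σ S, τ S) (1, 0) + τ' * fderiv ℝ G (σ S, τ S) (0, 1)) S := by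
    intro G hG σ τ σ' τ' S hσ hτ hpos
    have hd : HasFDerivAt G (fderiv ℝ G (σ S, τ S)) (σ S, τ S) :=
      ((hG (σ S, τ S) hpos).differentiableAt (by simp)).hasFDerivAt
    have h3 : HasDerivAt (fun s => (σ s, τ s)) ((σ', τ') : ℝ × ℝ) S := HasDerivAt.prodMk hσ hτ
    have h4 := hd.comp_hasDerivAt S h3
    have hlin : fderiv ℝ G (σ S, τ S) (σ', τ') =
        σ' * fderiv ℝ G (σ S, τ S) (1, 0) + τ' * fderiv ℝ G (σ S, τ S) (0, 1) := by
      have h5 : ((σ', τ') : ℝ × ℝ) = σ' • ((1 : ℝ), (0 : ℝ)) + τ' • ((0 : ℝ), (1 : ℝ)) := by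
        simp [Prod.ext_iff]
      rw [h5, map_add, map_smul, map_smul, smul_eq_mul, smul_eq_mul]
    simpa [hlin, Function.comp_def] using h4
  -- rewrite the PDE in terms of F1, F2, F11
  have hP : ∀ x t : ℝ, 0 < t →
      F2 (x, t) + u x t / t + u x t * F1 (x, t) + F11 (x, t) = 0 := by
    intro x t ht
    have e1 : deriv (fun s => u x s) t = F2 (x, t) := by
      have h2 : HasDerivAt (fun s : ℝ => (x, s)) ((0 : ℝ), (1 : ℝ)) t :=
        HasDerivAt.prodMk (hasDerivAt_const t x) (hasDerivAt_id t)
      have hd : HasFDerivAt F (fderiv ℝ F (x, t)) (x, t) :=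
        ((hF (x, t) ht).differentiableAt (by simp)).hasFDerivAt
      have := hd.comp_hasDerivAt t h2
      exact HasDerivAt.deriv this
    have e2 : ∀ y : ℝ, deriv (fun y' => u y' t) y = F1 (y, t) :=
      fun y => (sliceX F hF y t ht).deriv
    have e3 : deriv (fun y => deriv (fun y' => u y' t) y) x = F11 (x, t) := by
      have : (fun y => deriv (fun y' => u y' t) y) = fun y => F1 (y, t) :=
        funext fun y => e2 y
      rw [this]
      exact (sliceX F1 hF1c x t ht).deriv
    have := hpde x t ht
    rw [e1, e2 x, e3] at this
    exact this
  -- the inverse change of variables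
  set c : ℝ := Real.exp (-l2) with hc_def
  set c2 : ℝ := Real.exp (-(2 * l2)) with hc2_def
  have hc : 0 < c := Real.exp_pos _
  have hc2 : 0 < c2 := Real.exp_pos _
  have hcc : Real.exp l2 * c = 1 := by rw [hc_def, ← Real.exp_add]; simp
  have hcc2 : Real.exp (2 * l2) * c2 = 1 := by rw [hc2_def, ← Real.exp_add]; simp
  have hc2c : c2 = c * c := by rw [hc2_def, hc_def, ← Real.exp_add]; ring_nf
  have hUeq : ∀ Y S : ℝ, 0 < S →
      U Y S = c * (u (c * (Y - l1) - l3 * Real.log (c2 * S)) (c2 * S) + l3 / (c2 * S)) := by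
    intro Y S hS
    have hts : 0 < c2 * S := mul_pos hc2 hS
    have h := hU (c * (Y - l1) - l3 * Real.log (c2 * S)) (c2 * S) hts
    have hx : Real.exp l2 * (c * (Y - l1) - l3 * Real.log (c2 * S)
        + l3 * Real.log (c2 * S)) + l1 = Y := by
      have : c * (Y - l1) - l3 * Real.log (c2 * S) + l3 * Real.log (c2 * S)
          = c * (Y - l1) := by ring
      rw [this, ← mul_assoc, hcc]; ring
    have ht' : Real.exp (2 * l2) * (c2 * S) = S := by
      rw [← mul_assoc, hcc2]; ring
    rw [hx, ht'] at h
    exact h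
  set t : ℝ := c2 * T with ht_def
  have ht : 0 < t := mul_pos hc2 hT
  set x0 : ℝ := c * (X - l1) - l3 * Real.log t with hx0_def
  -- the x-derivative of U, at every point Y
  have hξ : ∀ Y : ℝ, HasDerivAt (fun Y' : ℝ => c * (Y' - l1) - l3 * Real.log t) c Y := by
    intro Y
    have := (((hasDerivAt_id Y).sub_const l1).const_mul c).sub_const (l3 * Real.log t)
    simpa using this
  have hUX : ∀ Y : ℝ, deriv (fun Y' => U Y' T) Y
      = c * (F1 (c * (Y - l1) - l3 * Real.log t, t) * c) := by
    intro Y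
    have heq : (fun Y' => U Y' T)
        = fun Y' => c * (u (c * (Y' - l1) - l3 * Real.log t) t + l3 / t) := by
      funext Y'
      simpa [← ht_def] using hUeq Y' T hT
    rw [heq]
    have h1 := (sliceX F hF (c * (Y - l1) - l3 * Real.log t) t ht).comp Y (hξ Y)
    exact (((h1.add_const (l3 / t)).const_mul c)).deriv
  -- second x-derivative
  have hUXX : deriv (fun Y => deriv (fun Y' => U Y' T) Y) X
      = c * (F11 (x0, t) * c * c) := by
    have heq : (fun Y => deriv (fun Y' => U Y' T) Y)
        = fun Y => c * (F1 (c * (Y - l1) - l3 * Real.log t, t) * c) :=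
      funext fun Y => hUX Y
    rw [heq]
    have h1 := (sliceX F1 hF1c x0 t ht).comp X (hξ X)
    exact ((h1.mul_const c).const_mul c).deriv
  -- the T-derivative of U
  have hτ : HasDerivAt (fun S : ℝ => c2 * S) c2 T := by
    simpa using (hasDerivAt_id T).const_mul c2
  have hσ : HasDerivAt (fun S : ℝ => c * (X - l1) - l3 * Real.log (c2 * S))
      (-(l3 * (t⁻¹ * c2))) T := by
    have hlog : HasDerivAt (fun S : ℝ => Real.log (c2 * S)) (t⁻¹ * c2) T := by
      have := (Real.hasDerivAt_log ht.ne').comp T hτ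
      exact this
    have := (hasDerivAt_const T (c * (X - l1))).sub (hlog.const_mul l3)
    simp only [zero_sub] at this
    exact this
  have hUT : deriv (fun S => U X S) T
      = c * ((-(l3 * (t⁻¹ * c2))) * F1 (x0, t) + c2 * F2 (x0, t)
          + l3 * (-c2 / t ^ 2)) := by
    have hev : (fun S => U X S) =ᶠ[nhds T]
        (fun S => c * (u (c * (X - l1) - l3 * Real.log (c2 * S)) (c2 * S)
          + l3 / (c2 * S))) := by
      filter_upwards [eventually_gt_nhds hT] with S hS
      exact hUeq X S hS
    rw [hev.deriv_eq]
    have h1 := chain F hF _ _ _ _ T hσ hτ (by simpa [← ht_def] using ht)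
    have hinv : HasDerivAt (fun S : ℝ => l3 / (c2 * S)) (l3 * (-c2 / t ^ 2)) T := by
      have h2 : HasDerivAt (fun S : ℝ => (c2 * S)⁻¹) (-c2 / t ^ 2) T := by
        have := hτ.inv (by simpa [← ht_def] using ht.ne')
        exact this
      simpa [div_eq_mul_inv] using h2.const_mul l3
    have h3 := ((h1.add hinv).const_mul c).deriv
    simpa [← ht_def, ← hx0_def] using h3
  -- put everything together
  have hval : U X T = c * (u x0 t + l3 / t) := by
    simpa [← ht_def, ← hx0_def] using hUeq X T hT
  rw [hUT, hval, hUX X, hUXX]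
  have hp := hP x0 t ht
  have hx0X : c * (X - l1) - l3 * Real.log t = x0 := rfl
  rw [hx0X]
  have hTt : T = Real.exp (2 * l2) * t := by
    rw [ht_def, ← mul_assoc, hcc2, one_mul]
  rw [hTt]
  have he2 : Real.exp (2 * l2) ≠ 0 := (Real.exp_pos _).ne'
  have hc2' : c2 * Real.exp (2 * l2) = 1 := by rw [mul_comm]; exact hcc2
  have hexp2 : Real.exp (2 * l2) = (c * c)⁻¹ := by
    rw [← hc2c]
    exact eq_inv_of_mul_eq_one_left hcc2
  rw [hexp2, hc2c]
  field_simp at hp ⊢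
  linear_combination (c ^ 3 * t) * hp
end

section
/- Invariantizing the discrete time derivative (ln u)_t^d = (ln u_{0,1} − ln u_{0,0})/τ under the heat-equation product frame λ₁ = −t_{0,0}, λ₂ = −(x_{0,0} + 2p), λ₃ = e^{−t_{0,0}}p, λ₄ = e^{−t_{0,0}}(−ln u_{0,0} + x_{0,0}p + p²) with p = (ln u)_x^d gives I^d = (ln u_{0,1} − e^τ ln u_{0,0})/τ − (σ/τ)e^τ p + ((e^τ − e^{2τ})/τ)p², where σ = x_{0,1} − x_{0,0} and τ = t_{0,1} − t_{0,0}. -/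
/-!
With `λ₃ = e^{-t₀} p` and `λ₄ = e^{-t₀} c` the `ln U`-component of the action depends on time only
through `t - t₀`; at `z_{0,0}` the frame normalises it to `0`, at `z_{0,1}` it is the numerator of
`I^d`, and time translation leaves the denominator `τ` unchanged.
-/

open Real

/-- The `ln U`-component of the heat-equation symmetry group with parameters `λ₃ = l3`, `λ₄ = l4`. -/
noncomputable def heatLogAction (l3 l4 x t u : ℝ) : ℝ :=
  log u - l3 * exp t * x - l3 ^ 2 * exp (2 * t) + l4 * exp t

theorem heatLogAction_exp_neg_mul (t₀ p c x t u : ℝ) :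
    heatLogAction (exp (-t₀) * p) (exp (-t₀) * c) x t u
      = log u - exp (t - t₀) * p * x - exp (2 * (t - t₀)) * p ^ 2 + exp (t - t₀) * c := by
  have h₁ : exp (-t₀) * exp t = exp (t - t₀) := by rw [← exp_add]; ring_nf
  have h₂ : exp (-t₀) ^ 2 * exp (2 * t) = exp (2 * (t - t₀)) := by
    rw [← exp_nat_mul, ← exp_add]; push_cast; ring_nf
  unfold heatLogAction
  linear_combination (-p * x + c) * h₁ - p ^ 2 * h₂

theorem heat_discrete_invariant_Id_general
    (x00 x01 t00 t01 : ℝ) (u00 u01 : ℝ)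
    (σ τ p : ℝ)
    (hσ : σ = x01 - x00) (hτ : τ = t01 - t00)
    (l1 l3 l4 : ℝ)
    (hl3 : l3 = Real.exp (-t00) * p)
    (hl4 : l4 = Real.exp (-t00) * (-Real.log u00 + x00 * p + p ^ 2))
    (lnU : ℝ → ℝ → ℝ → ℝ)
    (hlnU : lnU = fun x t u => Real.log u - l3 * Real.exp t * x
      - l3 ^ 2 * Real.exp (2 * t) + l4 * Real.exp t) :
    (lnU x01 t01 u01 - lnU x00 t00 u00) / ((t01 + l1) - (t00 + l1))
      = (Real.log u01 - Real.exp τ * Real.log u00) / τ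
        - (σ / τ) * Real.exp τ * p
        + ((Real.exp τ - Real.exp (2 * τ)) / τ) * p ^ 2 := by
  subst hlnU hl3 hl4
  have hden : t01 + l1 - (t00 + l1) = τ := by rw [hτ]; ring
  change (heatLogAction _ _ x01 t01 u01 - heatLogAction _ _ x00 t00 u00) / _ = _
  rw [heatLogAction_exp_neg_mul, heatLogAction_exp_neg_mul, ← hτ, sub_self, hden, hσ]
  simp only [mul_zero, exp_zero]
  ring

/-- Invariantizing the discrete time derivative `(ln u)_t^d` under the
heat-equation product frame gives
`I^d = (ln u₀₁ − e^τ ln u₀₀)/τ − (σ/τ) e^τ p + ((e^τ − e^{2τ})/τ) p²`. -/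
theorem heat_discrete_invariant_Id
    (xm1 x00 x1 x01 t00 t01 : ℝ) (um1 u00 u1 u01 : ℝ)
    (hum1 : 0 < um1) (hu00 : 0 < u00) (hu1 : 0 < u1) (hu01 : 0 < u01)
    (hx : x1 ≠ xm1)
    (σ τ p : ℝ)
    (hσ : σ = x01 - x00) (hτ : τ = t01 - t00) (hτ0 : τ ≠ 0)
    (hp : p = (Real.log u1 - Real.log um1) / (x1 - xm1))
    (l1 l2 l3 l4 : ℝ)
    (hl1 : l1 = -t00) (hl2 : l2 = -(x00 + 2 * p))
    (hl3 : l3 = Real.exp (-t00) * p)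
    (hl4 : l4 = Real.exp (-t00) * (-Real.log u00 + x00 * p + p ^ 2))
    (lnU : ℝ → ℝ → ℝ → ℝ)
    (hlnU : lnU = fun x t u => Real.log u - l3 * Real.exp t * x
      - l3 ^ 2 * Real.exp (2 * t) + l4 * Real.exp t) :
    (lnU x01 t01 u01 - lnU x00 t00 u00) / ((t01 + l1) - (t00 + l1))
      = (Real.log u01 - Real.exp τ * Real.log u00) / τ
        - (σ / τ) * Real.exp τ * p
        + ((Real.exp τ - Real.exp (2 * τ)) / τ) * p ^ 2 :=
  heat_discrete_invariant_Id_general x00 x01 t00 t01 u00 u01 σ τ p hσ hτ l1 l3 l4 hl3 hl4 lnU hlnU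
end

section
/- Invariantizing x_{0,1} under the heat-equation product frame gives ι(x_{0,1}) = σ + 2(e^τ − 1)(ln u)_x^d, where σ = x_{0,1} − x_{0,0} and τ = t_{0,1} − t_{0,0}. Consequently, the mesh equation σ = 2(1 − e^τ)(ln u)_x^d is invariant under the group action. -/
/-!
The action leaves `τ` unchanged, shifts the discrete derivative `(ln u)_x^d` by `-λ₃e^{t₀₀}`
(the `x`-dependence of `ln U` is linear with slope `-λ₃eᵗ`, and `X - x` is constant on a time
level), and shifts `σ` by `2λ₃e^{t₀₀}(e^τ - 1)`. Hence both sides of the mesh equation move by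
the same amount. The invariantization of `x₀₁` is a direct substitution, using
`e^{-t₀₀} e^{t₀₁} = e^τ`.
-/

theorem div_sub_eq_of_sub_eq_sub_mul {a b x y A B X Y s : ℝ} (hxy : x - y ≠ 0)
    (hA : A - B = a - b - s * (x - y)) (hX : X - Y = x - y) :
    (A - B) / (X - Y) = (a - b) / (x - y) - s := by
  rw [hA, hX, sub_div, mul_div_cancel_right₀ _ hxy]

theorem add_mul_sub_one_eq_iff (σ p E c : ℝ) :
    σ + 2 * c * (E - 1) = 2 * (1 - E) * (p - c) ↔ σ = 2 * (1 - E) * p := by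
  constructor <;> intro h <;> linear_combination h

theorem heat_mesh_invariant_general
    (xm1 x00 x1 x01 t00 t01 : ℝ) (um1 u1 : ℝ)
    (hx : x1 ≠ xm1)
    (σ τ p : ℝ)
    (hσ : σ = x01 - x00) (hτ : τ = t01 - t00)
    (hp : p = (Real.log u1 - Real.log um1) / (x1 - xm1))
    (l2 l3 : ℝ)
    (hl2 : l2 = -(x00 + 2 * p))
    (hl3 : l3 = Real.exp (-t00) * p) :
    -- invariantization of x₀₁ under the product frame
    (x01 + 2 * l3 * Real.exp t01 + l2 = σ + 2 * (Real.exp τ - 1) * p)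
    ∧
    -- the mesh equation σ = 2(1 − e^τ)(ln u)_x^d is invariant under the action
    (∀ m1 m2 m3 m4 : ℝ,
      ((x01 + 2 * m3 * Real.exp t01 + m2) - (x00 + 2 * m3 * Real.exp t00 + m2)
        = 2 * (1 - Real.exp ((t01 + m1) - (t00 + m1))) *
          (((Real.log u1 - m3 * Real.exp t00 * x1
              - m3 ^ 2 * Real.exp (2 * t00) + m4 * Real.exp t00)
            - (Real.log um1 - m3 * Real.exp t00 * xm1
              - m3 ^ 2 * Real.exp (2 * t00) + m4 * Real.exp t00))
            / ((x1 + 2 * m3 * Real.exp t00 + m2)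
              - (xm1 + 2 * m3 * Real.exp t00 + m2))))
      ↔ σ = 2 * (1 - Real.exp τ) * p) := by
  have hexp : Real.exp τ = Real.exp t01 / Real.exp t00 := by rw [hτ, Real.exp_sub]
  refine ⟨?_, fun m1 m2 m3 m4 => ?_⟩
  · rw [hl2, hl3, hσ, hexp, Real.exp_neg]
    ring
  · have hτ' : (t01 + m1) - (t00 + m1) = τ := by rw [hτ]; ring
    have hσ' : (x01 + 2 * m3 * Real.exp t01 + m2) - (x00 + 2 * m3 * Real.exp t00 + m2)
        = σ + 2 * (m3 * Real.exp t00) * (Real.exp τ - 1) := by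
      rw [hσ, hexp]
      field_simp
      ring
    rw [hσ', hτ', div_sub_eq_of_sub_eq_sub_mul (a := Real.log u1) (b := Real.log um1)
      (x := x1) (y := xm1) (s := m3 * Real.exp t00) (sub_ne_zero.mpr hx) (by ring) (by ring), ← hp]
    exact add_mul_sub_one_eq_iff _ _ _ _

/-- Invariantizing `x₀₁` under the heat-equation product frame gives
`ι(x₀₁) = σ + 2(e^τ − 1)(ln u)_x^d`; consequently the mesh equation
`σ = 2(1 − e^τ)(ln u)_x^d` is invariant under the group action. -/
theorem heat_mesh_invariant
    (xm1 x00 x1 x01 t00 t01 : ℝ) (um1 u00 u1 : ℝ)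
    (hum1 : 0 < um1) (hu00 : 0 < u00) (hu1 : 0 < u1)
    (hx : x1 ≠ xm1)
    (σ τ p : ℝ)
    (hσ : σ = x01 - x00) (hτ : τ = t01 - t00)
    (hp : p = (Real.log u1 - Real.log um1) / (x1 - xm1))
    (l1 l2 l3 l4 : ℝ)
    (hl1 : l1 = -t00) (hl2 : l2 = -(x00 + 2 * p))
    (hl3 : l3 = Real.exp (-t00) * p)
    (hl4 : l4 = Real.exp (-t00) * (-Real.log u00 + x00 * p + p ^ 2)) :
    -- invariantization of x₀₁ under the product frame
    (x01 + 2 * l3 * Real.exp t01 + l2 = σ + 2 * (Real.exp τ - 1) * p)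
    ∧
    -- the mesh equation σ = 2(1 − e^τ)(ln u)_x^d is invariant under the action
    (∀ m1 m2 m3 m4 : ℝ,
      ((x01 + 2 * m3 * Real.exp t01 + m2) - (x00 + 2 * m3 * Real.exp t00 + m2)
        = 2 * (1 - Real.exp ((t01 + m1) - (t00 + m1))) *
          (((Real.log u1 - m3 * Real.exp t00 * x1
              - m3 ^ 2 * Real.exp (2 * t00) + m4 * Real.exp t00)
            - (Real.log um1 - m3 * Real.exp t00 * xm1
              - m3 ^ 2 * Real.exp (2 * t00) + m4 * Real.exp t00))
            / ((x1 + 2 * m3 * Real.exp t00 + m2)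
              - (xm1 + 2 * m3 * Real.exp t00 + m2))))
      ↔ σ = 2 * (1 - Real.exp τ) * p) :=
  heat_mesh_invariant_general xm1 x00 x1 x01 t00 t01 um1 u1 hx σ τ p hσ hτ hp l2 l3 hl2 hl3
end
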